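/- Let x, y, z ∈ ℝ^d and let c, γ ⊆ ℝ^d be convex sets. If there exist y' ∈ [x,y] ∩ c and z' ∈ [x,z] ∩ γ, with y ∈ γ and z ∈ c, then the segments [y,z'] and [y',z] intersect, and consequently c ∩ γ ≠ ∅. -/

import Mathlib

/-!
Write `y' = (1 - a) • x + a • y` and `z' = (1 - b) • x + b • z`. If `a = 1` then `y' = y` lies on
both segments. Otherwise `D = 1 - a * b > 0`, and the point with barycentric coordinates
`((1 - a)(1 - b), a (1 - b), b (1 - a)) / D` with respect to `(x, y, z)` lies on both `[y, z']` and
`[y', z]`. That point is in `γ ⊇ [y, z']` and in `c ⊇ [y', z]`.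
-/

theorem segment_inter_segment_nonempty_of_mem_segment {𝕜 E : Type*} [Field 𝕜] [LinearOrder 𝕜]
    [IsStrictOrderedRing 𝕜] [AddCommGroup E] [Module 𝕜 E] {x y z y' z' : E}
    (hy' : y' ∈ segment 𝕜 x y) (hz' : z' ∈ segment 𝕜 x z) :
    (segment 𝕜 y z' ∩ segment 𝕜 y' z).Nonempty := by
  obtain ⟨a', a, ha', ha, haa, rfl⟩ := hy'
  obtain ⟨b', b, hb', hb, hbb, rfl⟩ := hz'
  obtain rfl : a' = 1 - a := by linarith
  obtain rfl : b' = 1 - b := by linarith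
  rcases (show a ≤ 1 by linarith).eq_or_lt with rfl | ha1
  · exact ⟨y, left_mem_segment 𝕜 y _, by simpa using left_mem_segment 𝕜 y z⟩
  have hD : 0 < 1 - a * b := by nlinarith
  -- the form in which `match_scalars` leaves the denominator
  have hD' : 1 - b * a ≠ 0 := by rw [mul_comm]; exact hD.ne'
  refine ⟨(a * (1 - b) / (1 - a * b)) • y + ((1 - a) / (1 - a * b)) • ((1 - b) • x + b • z),
    ⟨_, _, by positivity, by positivity, by field_simp; ring, rfl⟩,
    ⟨(1 - b) / (1 - a * b), b * (1 - a) / (1 - a * b), by positivity, by positivity,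
      by field_simp; ring, ?_⟩⟩
  match_scalars <;> field_simp

theorem stmt1 {d : ℕ} (c γ : Set (EuclideanSpace ℝ (Fin d)))
    (hc : Convex ℝ c) (hγ : Convex ℝ γ)
    (x y z y' z' : EuclideanSpace ℝ (Fin d))
    (hy : y ∈ γ) (hz : z ∈ c)
    (hy' : y' ∈ segment ℝ x y ∩ c) (hz' : z' ∈ segment ℝ x z ∩ γ) :
    (segment ℝ y z' ∩ segment ℝ y' z).Nonempty ∧ (c ∩ γ).Nonempty := by
  obtain ⟨p, hpγ, hpc⟩ := segment_inter_segment_nonempty_of_mem_segment hy'.1 hz'.1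
  exact ⟨⟨p, hpγ, hpc⟩, p, hc.segment_subset hy'.2 hz hpc, hγ.segment_subset hy hz'.2 hpγ⟩
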